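/- Let G be a hereditary graph class with sep(G(n)) ≤ c·n^(1−ε) for some c > 0 and ε ∈ (0,1). Then every n-vertex graph G ∈ G has a set S such that both S and every connected component of G − S have at most max{c·2^ε/(2^ε − 1), 1}·n^(1/(1+ε)) vertices; consequently spw(G) ≤ max{c·2^ε/(2^ε − 1), 1}·n^(1/(1+ε)). -/

import Mathlib

open SimpleGraph

/-- The strong product of two simple graphs. -/
def StrongProd {V W : Type*} (G : SimpleGraph V) (H : SimpleGraph W) : SimpleGraph (V × W) where
  Adj a b := a ≠ b ∧ (a.1 = b.1 ∨ G.Adj a.1 b.1) ∧ (a.2 = b.2 ∨ H.Adj a.2 b.2)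
  symm := by
    constructor; rintro a b ⟨hne, h1, h2⟩
    exact ⟨hne.symm, h1.imp Eq.symm (fun h => h.symm), h2.imp Eq.symm (fun h => h.symm)⟩
  loopless := by constructor; rintro a ⟨hne, _⟩; exact hne rfl

/-- `G` is isomorphic to a subgraph of `H`. -/
def ContainedIn {V W : Type*} (G : SimpleGraph V) (H : SimpleGraph W) : Prop :=
  ∃ f : V → W, Function.Injective f ∧ ∀ ⦃u v⦄, G.Adj u v → H.Adj (f u) (f v)

/-- Every connected component of `G - S` has at most `q` vertices. -/
def CompsLE {V : Type*} (G : SimpleGraph V) (S : Set V) (q : ℕ) : Prop :=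
  ∀ c : (G.induce Sᶜ).ConnectedComponent, Nat.card c.supp ≤ q

/-- Every connected component of `G - S` has at most `q` vertices (real bound). -/
def CompsLER {V : Type*} (G : SimpleGraph V) (S : Set V) (q : ℝ) : Prop :=
  ∀ c : (G.induce Sᶜ).ConnectedComponent, (Nat.card c.supp : ℝ) ≤ q

/-- `(TG, B)` is a tree-decomposition of `G`: `TG` is a tree, every vertex and
every edge of `G` lies in some bag, and for each vertex the set of nodes whose
bag contains it induces a nonempty connected subgraph of `TG`. -/
def IsTreeDecomp {V T : Type*} (G : SimpleGraph V) (TG : SimpleGraph T) (B : T → Set V) : Prop :=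
  TG.IsTree ∧
  (∀ v, ∃ t, v ∈ B t) ∧
  (∀ ⦃u v⦄, G.Adj u v → ∃ t, u ∈ B t ∧ v ∈ B t) ∧
  (∀ v, (TG.induce {t | v ∈ B t}).Connected)

/-- The tree-width of `G` is at most `k`. -/
def twLE {V : Type*} (G : SimpleGraph V) (k : ℕ) : Prop :=
  ∃ (T : Type) (TG : SimpleGraph T) (B : T → Set V),
    IsTreeDecomp G TG B ∧ ∀ t, Nat.card (B t) ≤ k + 1

/-- A path-decomposition of `G` with `t` bags. -/
def IsPathDecomp {V : Type*} (G : SimpleGraph V) (t : ℕ) (B : Fin t → Set V) : Prop :=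
  (∀ v, ∃ i, v ∈ B i) ∧
  (∀ ⦃u v⦄, G.Adj u v → ∃ i, u ∈ B i ∧ v ∈ B i) ∧
  (∀ i j l : Fin t, i ≤ j → j ≤ l → B i ∩ B l ⊆ B j)

/-- The path-width of `G` is at most `k`. -/
def pwLE {V : Type*} (G : SimpleGraph V) (k : ℕ) : Prop :=
  ∃ (t : ℕ) (B : Fin t → Set V), IsPathDecomp G t B ∧ ∀ i, Nat.card (B i) ≤ k + 1

/-- The tree-depth of `G` is at most `d`: there is a strict forest order (the
strict ancestor relation of a rooted forest) whose comparability graph contains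
`G`, with all chains of at most `d` vertices. -/
def tdLE {V : Type*} (G : SimpleGraph V) (d : ℕ) : Prop :=
  ∃ lt : V → V → Prop,
    Transitive lt ∧
    (∀ u v w, lt u w → lt v w → lt u v ∨ lt v u ∨ u = v) ∧
    (∀ ⦃u v⦄, G.Adj u v → lt u v ∨ lt v u) ∧
    ∃ f : V → Fin d, ∀ u v, lt u v → f u < f v

/-- `P` is an `H`-partition of `G`: the parts partition `V(G)` and every edge of
`G` lies within a part or between parts indexed by adjacent vertices of `H`. -/
def IsHPartition {V W : Type*} (G : SimpleGraph V) (H : SimpleGraph W) (P : W → Set V) : Prop :=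
  (∀ v, ∃! x, v ∈ P x) ∧
  ∀ ⦃u v⦄, G.Adj u v → ∀ ⦃x y⦄, u ∈ P x → v ∈ P y → x = y ∨ H.Adj x y

/-- The tree-partition-width of `G` is at most `m`. -/
def tpwLE {V : Type*} (G : SimpleGraph V) (m : ℕ) : Prop :=
  ∃ (T : Type) (TG : SimpleGraph T) (P : T → Set V),
    TG.IsTree ∧ IsHPartition G TG P ∧ ∀ x, Nat.card (P x) ≤ m

/-- The star with centre `none` and leaves `some i`, `i : ι`. -/
def starGraph (ι : Type*) : SimpleGraph (Option ι) where
  Adj a b := a ≠ b ∧ (a = none ∨ b = none)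
  symm := by constructor; rintro a b ⟨hne, h⟩; exact ⟨hne.symm, h.symm⟩
  loopless := by constructor; rintro a ⟨hne, _⟩; exact hne rfl

/-- A graph class is hereditary if it is closed under induced subgraphs. -/
def Hereditary (𝒢 : ∀ V : Type, SimpleGraph V → Prop) : Prop :=
  ∀ (V : Type) (G : SimpleGraph V), 𝒢 V G → ∀ S : Set V, 𝒢 S (G.induce S)

/-- Every `n`-vertex graph of the class has a balanced separator of size at most
`c * n ^ (1 - ε)`. -/
def SepBound (𝒢 : ∀ V : Type, SimpleGraph V → Prop) (c ε : ℝ) : Prop :=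
  ∀ (V : Type) [Fintype V] (G : SimpleGraph V), 𝒢 V G →
    ∃ S : Finset V, (S.card : ℝ) ≤ c * (Fintype.card V : ℝ) ^ (1 - ε) ∧
      CompsLER G ↑S ((Fintype.card V : ℝ) / 2)

/-- The `k`-th power of the `n`-vertex path. -/
def pathPow (n k : ℕ) : SimpleGraph (Fin n) where
  Adj i j := i ≠ j ∧ (i.val : ℤ) - j.val ≤ k ∧ (j.val : ℤ) - i.val ≤ k
  symm := by constructor; rintro i j ⟨hne, h1, h2⟩; exact ⟨hne.symm, h2, h1⟩
  loopless := by constructor; rintro i ⟨hne, _⟩; exact hne rfl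

/-!
Split the graph recursively by balanced separators until every piece has at most `q` vertices.
With `a (2^ε - 1) = c`, the budget `max 0 (a (2^ε x / q^ε - x^(1-ε)))` of an `x`-vertex piece
pays for all separators cut out of it: a piece with `x ≤ m / 2` vertices has budget at most
`x · a 2^ε (q^(-ε) - m^(-ε))`, so the pieces of an `m`-vertex graph together leave exactly
`c m^(1-ε)` of its budget for its own separator. For `q = M n^(1/(1+ε))` with `M ≥ a 2^ε`, the
budget of the whole graph is at most `a 2^ε n / q^ε ≤ q`.
-/

noncomputable def separatorBudget (a ε q x : ℝ) : ℝ :=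
  max 0 (a * (2 ^ ε * x / q ^ ε - x ^ (1 - ε)))

section Budget

variable {a ε q m x : ℝ}

lemma separatorBudget_nonneg : 0 ≤ separatorBudget a ε q x := le_max_left _ _

lemma separatorBudget_le_mul (ha : 0 ≤ a) (hε : 0 ≤ ε) (hq : 0 < q) (hqm : q ≤ m)
    (hx : 0 ≤ x) (hxm : x ≤ m / 2) :
    separatorBudget a ε q x ≤ x * (a * 2 ^ ε * (1 / q ^ ε - 1 / m ^ ε)) := by
  have hm : 0 < m := hq.trans_le hqm
  have hβ : 0 ≤ 1 / q ^ ε - 1 / m ^ ε :=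
    sub_nonneg.2 (one_div_le_one_div_of_le (by positivity) (Real.rpow_le_rpow hq.le hqm hε))
  refine max_le (by positivity) ?_
  have key : 2 ^ ε * x / m ^ ε ≤ x ^ (1 - ε) := by
    rcases hx.eq_or_lt with rfl | hx
    · simpa using Real.rpow_nonneg le_rfl (1 - ε)
    rw [div_le_iff₀ (by positivity)]
    calc 2 ^ ε * x = x ^ (1 - ε) * (2 * x) ^ ε := by
          rw [Real.mul_rpow zero_le_two hx.le, mul_left_comm, ← Real.rpow_add hx, sub_add_cancel,
            Real.rpow_one]
      _ ≤ x ^ (1 - ε) * m ^ ε := by gcongr; linarith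
  calc a * (2 ^ ε * x / q ^ ε - x ^ (1 - ε))
      ≤ a * (2 ^ ε * x / q ^ ε - 2 ^ ε * x / m ^ ε) := by gcongr
    _ = x * (a * 2 ^ ε * (1 / q ^ ε - 1 / m ^ ε)) := by ring

lemma add_sum_separatorBudget_le {ι : Type*} (s : Finset ι) (y : ι → ℝ) (ha : 0 ≤ a)
    (hε : 0 ≤ ε) (hq : 0 < q) (hqm : q ≤ m) (hy : ∀ i ∈ s, 0 ≤ y i) (hym : ∀ i ∈ s, y i ≤ m / 2)
    (hsum : ∑ i ∈ s, y i ≤ m) :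
    a * (2 ^ ε - 1) * m ^ (1 - ε) + ∑ i ∈ s, separatorBudget a ε q (y i) ≤
      separatorBudget a ε q m := by
  have hm : 0 < m := hq.trans_le hqm
  set β := a * 2 ^ ε * (1 / q ^ ε - 1 / m ^ ε)
  have hβ : 0 ≤ β := mul_nonneg (by positivity)
    (sub_nonneg.2 (one_div_le_one_div_of_le (by positivity) (Real.rpow_le_rpow hq.le hqm hε)))
  have hmε : m / m ^ ε = m ^ (1 - ε) := by rw [Real.rpow_sub hm, Real.rpow_one]
  calc a * (2 ^ ε - 1) * m ^ (1 - ε) + ∑ i ∈ s, separatorBudget a ε q (y i)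
      ≤ a * (2 ^ ε - 1) * m ^ (1 - ε) + (∑ i ∈ s, y i) * β := by
        rw [Finset.sum_mul]
        gcongr with i hi
        exact separatorBudget_le_mul ha hε hq hqm (hy i hi) (hym i hi)
    _ ≤ a * (2 ^ ε - 1) * m ^ (1 - ε) + m * β := by gcongr
    _ = a * (2 ^ ε * m / q ^ ε - m ^ (1 - ε)) := by rw [← hmε]; ring
    _ ≤ separatorBudget a ε q m := le_max_right _ _

lemma separatorBudget_le (ha : 0 ≤ a) (hq : 0 < q) (hx : 0 ≤ x)
    (h : a * 2 ^ ε * x ≤ q ^ (1 + ε)) : separatorBudget a ε q x ≤ q := by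
  refine max_le hq.le ?_
  have hqε : q ^ (1 + ε) = q * q ^ ε := by rw [Real.rpow_add hq, Real.rpow_one]
  calc a * (2 ^ ε * x / q ^ ε - x ^ (1 - ε)) ≤ a * (2 ^ ε * x / q ^ ε) :=
        mul_le_mul_of_nonneg_left (sub_le_self _ (Real.rpow_nonneg hx _)) ha
    _ = a * 2 ^ ε * x / q ^ ε := by ring
    _ ≤ q := by rw [div_le_iff₀ (by positivity), ← hqε]; exact h

lemma mul_le_mul_rpow_one_div_one_add_rpow (hM : 1 ≤ m) (hx : 0 ≤ x) (hε : 0 ≤ ε) :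
    m * x ≤ (m * x ^ (1 / (1 + ε))) ^ (1 + ε) := by
  rw [Real.mul_rpow (by linarith) (by positivity), ← Real.rpow_mul hx,
    one_div_mul_cancel (by positivity), Real.rpow_one]
  gcongr
  simpa using Real.rpow_le_rpow_of_exponent_le hM (by linarith : (1 : ℝ) ≤ 1 + ε)

end Budget

lemma Set.ncard_union_iUnion_le {α ι : Type*} [Fintype ι] (S : Set α) (T : ι → Set α) :
    (S ∪ ⋃ i, T i).ncard ≤ S.ncard + ∑ i, (T i).ncard := by
  have := Finset.univ.set_ncard_biUnion_le T
  simp only [Finset.mem_univ, Set.iUnion_true] at this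
  exact (Set.ncard_union_le _ _).trans (by omega)

namespace SimpleGraph

variable {V : Type*} (G : SimpleGraph V)

def ConnectedSubsetsLE (s : Set V) (q : ℝ) : Prop :=
  ∀ t ⊆ s, (G.induce t).Connected → (t.ncard : ℝ) ≤ q

lemma connected_induce_image_iff {s : Set V} (t : Set s) :
    (G.induce (Subtype.val '' t)).Connected ↔ ((G.induce s).induce t).Connected := by
  let f : (G.induce s).induce t ↪g G := (Embedding.induce s).comp (Embedding.induce t)
  have hrange : Set.range f = Subtype.val '' t := by
    ext v
    constructor
    · rintro ⟨x, rfl⟩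
      exact ⟨x.1, x.2, rfl⟩
    · rintro ⟨x, hx, rfl⟩
      exact ⟨⟨x, hx⟩, rfl⟩
  rw [← hrange]
  exact f.isoInduceRange.connected_iff.symm

lemma ConnectedComponent.connected_induce_image_supp {s : Set V}
    (C : (G.induce s).ConnectedComponent) : (G.induce (Subtype.val '' C.supp)).Connected :=
  (G.connected_induce_image_iff C.supp).2 C.connected_toSimpleGraph

lemma ConnectedComponent.ncard_image_supp {s : Set V} (C : (G.induce s).ConnectedComponent) :
    (Subtype.val '' C.supp).ncard = Nat.card C.supp := by
  rw [Set.ncard_image_of_injective _ Subtype.val_injective, Nat.card_coe_set_eq]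

lemma exists_subset_image_supp_of_connected {s t : Set V} (hts : t ⊆ s)
    (ht : (G.induce t).Connected) :
    ∃ C : (G.induce s).ConnectedComponent, t ⊆ Subtype.val '' C.supp := by
  obtain ⟨⟨v, hv⟩⟩ := ht.nonempty
  refine ⟨(G.induce s).connectedComponentMk ⟨v, hts hv⟩, fun u hu ↦ ⟨⟨u, hts hu⟩, ?_, rfl⟩⟩
  exact ConnectedComponent.sound <|
    (ht.preconnected ⟨u, hu⟩ ⟨v, hv⟩).map (G.induceHomOfLE hts).toHom

lemma sum_ncard_image_supp [Finite V] (s : Set V) [Fintype (G.induce s).ConnectedComponent] :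
    ∑ C : (G.induce s).ConnectedComponent, (Subtype.val '' C.supp).ncard = s.ncard := by
  simp_rw [ConnectedComponent.ncard_image_supp, Nat.card_coe_set_eq]
  rw [← finsum_eq_sum_of_fintype, ← Set.ncard_iUnion_of_finite (fun _ ↦ Set.toFinite _)
    (pairwise_disjoint_supp_connectedComponent _), iUnion_connectedComponentSupp,
    Set.ncard_univ, Nat.card_coe_set_eq]

theorem compsLER_iff_connectedSubsetsLE [Finite V] {S : Set V} {q : ℝ} :
    CompsLER G S q ↔ G.ConnectedSubsetsLE Sᶜ q := by
  refine ⟨fun h t hts ht ↦ ?_, fun h C ↦ ?_⟩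
  · obtain ⟨C, htC⟩ := G.exists_subset_image_supp_of_connected hts ht
    calc (t.ncard : ℝ) ≤ (Subtype.val '' C.supp).ncard := by
          exact_mod_cast Set.ncard_le_ncard htC (Set.toFinite _)
      _ = Nat.card C.supp := by rw [ConnectedComponent.ncard_image_supp]
      _ ≤ q := h C
  · rw [← ConnectedComponent.ncard_image_supp]
    exact h _ (by rintro _ ⟨x, -, rfl⟩; exact x.2) C.connected_induce_image_supp

theorem connectedSubsetsLE_sdiff_image_of_compsLER [Finite V] {U : Set V} {T : Set U} {q : ℝ}
    (h : CompsLER (G.induce U) T q) : G.ConnectedSubsetsLE (U \ Subtype.val '' T) q := by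
  rw [compsLER_iff_connectedSubsetsLE] at h
  intro t htU ht
  have himage : Subtype.val '' (Subtype.val ⁻¹' t : Set U) = t := by
    rw [Subtype.image_preimage_coe]
    exact Set.inter_eq_right.2 (htU.trans Set.sdiff_subset)
  rw [← himage, connected_induce_image_iff] at ht
  rw [← himage, Set.ncard_image_of_injective _ Subtype.val_injective]
  exact h _ (fun x hx hxT ↦ (htU hx).2 ⟨x, hxT, rfl⟩) ht

theorem connectedSubsetsLE_sdiff_union_iUnion {U S : Set V} {q : ℝ}
    (SC : (G.induce (U \ S)).ConnectedComponent → Set V)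
    (hSC : ∀ C, G.ConnectedSubsetsLE (Subtype.val '' C.supp \ SC C) q) :
    G.ConnectedSubsetsLE (U \ (S ∪ ⋃ C, SC C)) q := by
  intro t ht htc
  obtain ⟨C, htC⟩ := G.exists_subset_image_supp_of_connected (s := U \ S)
    (fun x hx ↦ ⟨(ht hx).1, fun h ↦ (ht hx).2 (Or.inl h)⟩) htc
  have htC' : t ⊆ Subtype.val '' C.supp \ SC C :=
    fun x hx ↦ ⟨htC hx, fun h ↦ (ht hx).2 (Or.inr (Set.mem_iUnion.2 ⟨C, h⟩))⟩
  exact hSC C t htC' htc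

theorem exists_connectedSubsetsLE_of_balanced [Finite V] {a ε q : ℝ} (ha : 0 ≤ a)
    (hε : 0 ≤ ε) (hq : 0 < q)
    (hbal : ∀ U : Set V, ∃ S : Set V, (S.ncard : ℝ) ≤ a * (2 ^ ε - 1) * (U.ncard : ℝ) ^ (1 - ε) ∧
      G.ConnectedSubsetsLE (U \ S) (U.ncard / 2)) (U : Set V) :
    ∃ S : Set V, (S.ncard : ℝ) ≤ separatorBudget a ε q U.ncard ∧
      G.ConnectedSubsetsLE (U \ S) q := by
  induction hn : U.ncard using Nat.strong_induction_on generalizing U with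
  | _ n ih =>
    subst hn
    by_cases hU : (U.ncard : ℝ) ≤ q
    · refine ⟨∅, by simpa using separatorBudget_nonneg, fun t ht _ ↦ le_trans ?_ hU⟩
      exact_mod_cast Set.ncard_le_ncard (ht.trans Set.sdiff_subset) (Set.toFinite _)
    push Not at hU
    obtain ⟨S, hS, hpieces⟩ := hbal U
    let P (C : (G.induce (U \ S)).ConnectedComponent) : Set V := Subtype.val '' C.supp
    have hP (C) : ((P C).ncard : ℝ) ≤ U.ncard / 2 :=
      hpieces _ (by rintro _ ⟨x, -, rfl⟩; exact x.2) C.connected_induce_image_supp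
    have hPlt (C) : (P C).ncard < U.ncard := by
      have : ((P C).ncard : ℝ) < U.ncard := (hP C).trans_lt (by linarith)
      exact_mod_cast this
    choose SC hSC hSCpieces using fun C ↦ ih _ (hPlt C) (P C) rfl
    have : Fintype (G.induce (U \ S)).ConnectedComponent := Fintype.ofFinite _
    refine ⟨S ∪ ⋃ C, SC C, ?_, G.connectedSubsetsLE_sdiff_union_iUnion SC hSCpieces⟩
    have hsum : ∑ C, ((P C).ncard : ℝ) ≤ U.ncard := by
      exact_mod_cast (G.sum_ncard_image_supp (U \ S)).trans_le
        (Set.ncard_le_ncard Set.sdiff_subset (Set.toFinite _))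
    calc ((S ∪ ⋃ C, SC C).ncard : ℝ) ≤ S.ncard + ∑ C, (SC C).ncard := by
          exact_mod_cast Set.ncard_union_iUnion_le S SC
      _ ≤ a * (2 ^ ε - 1) * (U.ncard : ℝ) ^ (1 - ε) + ∑ C, separatorBudget a ε q (P C).ncard := by
          push_cast
          gcongr with C
          exact hSC C
      _ ≤ separatorBudget a ε q U.ncard :=
          add_sum_separatorBudget_le _ _ ha hε hq hU.le (fun _ _ ↦ by positivity)
            (fun C _ ↦ hP C) hsum

end SimpleGraph

theorem SepBound.exists_balanced_separator {𝒢 : ∀ V : Type, SimpleGraph V → Prop}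
    (hher : Hereditary 𝒢) {c ε : ℝ} (hsep : SepBound 𝒢 c ε) {V : Type} [Finite V]
    {G : SimpleGraph V} (hG : 𝒢 V G) (U : Set V) :
    ∃ S : Set V, (S.ncard : ℝ) ≤ c * (U.ncard : ℝ) ^ (1 - ε) ∧
      G.ConnectedSubsetsLE (U \ S) (U.ncard / 2) := by
  have := Fintype.ofFinite U
  obtain ⟨S, hS, hpieces⟩ := hsep U (G.induce U) (hher V G hG U)
  rw [Fintype.card_eq_nat_card, Nat.card_coe_set_eq] at hS hpieces
  refine ⟨Subtype.val '' (S : Set U), ?_, G.connectedSubsetsLE_sdiff_image_of_compsLER hpieces⟩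
  rwa [Set.ncard_image_of_injective _ Subtype.val_injective, Set.ncard_coe_finset]

theorem sublinear_separator_spw_general
    (𝒢 : ∀ V : Type, SimpleGraph V → Prop) (hher : Hereditary 𝒢)
    (c ε : ℝ) (hc : 0 < c) (hε0 : 0 < ε)
    (hsep : SepBound 𝒢 c ε)
    (V : Type) [Fintype V] (G : SimpleGraph V) (hG : 𝒢 V G) :
    ∃ S : Finset V,
      (S.card : ℝ) ≤
        max (c * 2 ^ ε / (2 ^ ε - 1)) 1 * (Fintype.card V : ℝ) ^ (1 / (1 + ε)) ∧
      CompsLER G (↑S)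
        (max (c * 2 ^ ε / (2 ^ ε - 1)) 1 * (Fintype.card V : ℝ) ^ (1 / (1 + ε))) := by
  classical
  set n := Fintype.card V
  set M := max (c * 2 ^ ε / (2 ^ ε - 1)) 1
  have hM : 1 ≤ M := le_max_right _ _
  rcases n.eq_zero_or_pos with hn | hn
  · have : IsEmpty V := Fintype.card_eq_zero_iff.1 hn
    have hq : 0 ≤ M * (n : ℝ) ^ (1 / (1 + ε)) := by positivity
    exact ⟨∅, by simpa using hq, fun C ↦ isEmptyElim C.out.1⟩
  have h2ε : (0 : ℝ) < 2 ^ ε - 1 := sub_pos.2 (Real.one_lt_rpow one_lt_two hε0)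
  set a := c / (2 ^ ε - 1)
  have hq : 0 < M * (n : ℝ) ^ (1 / (1 + ε)) := by positivity
  have hbal := SepBound.exists_balanced_separator hher hsep hG
  rw [← div_mul_cancel₀ c h2ε.ne'] at hbal
  obtain ⟨S, hS, hpieces⟩ :=
    G.exists_connectedSubsetsLE_of_balanced (by positivity) hε0.le hq hbal Set.univ
  rw [Set.ncard_univ, Nat.card_eq_fintype_card] at hS
  rw [← Set.compl_eq_univ_sdiff] at hpieces
  refine ⟨S.toFinset, ?_, by rwa [Set.coe_toFinset, G.compsLER_iff_connectedSubsetsLE]⟩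
  rw [← Set.ncard_eq_toFinset_card']
  refine hS.trans (separatorBudget_le (by positivity) hq (by positivity) ?_)
  calc a * 2 ^ ε * n ≤ M * n := by
        gcongr
        exact (div_mul_eq_mul_div c _ _).trans_le (le_max_left _ _)
    _ ≤ _ := mul_le_mul_rpow_one_div_one_add_rpow hM (by positivity) hε0.le

theorem sublinear_separator_spw
    (𝒢 : ∀ V : Type, SimpleGraph V → Prop) (hher : Hereditary 𝒢)
    (c ε : ℝ) (hc : 0 < c) (hε0 : 0 < ε) (hε1 : ε < 1)
    (hsep : SepBound 𝒢 c ε)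
    (V : Type) [Fintype V] (G : SimpleGraph V) (hG : 𝒢 V G) :
    ∃ S : Finset V,
      (S.card : ℝ) ≤
        max (c * 2 ^ ε / (2 ^ ε - 1)) 1 * (Fintype.card V : ℝ) ^ (1 / (1 + ε)) ∧
      CompsLER G (↑S)
        (max (c * 2 ^ ε / (2 ^ ε - 1)) 1 * (Fintype.card V : ℝ) ^ (1 / (1 + ε))) :=
  sublinear_separator_spw_general 𝒢 hher c ε hc hε0 hsep V G hG
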